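/- arXiv:0909.4806 — 4 statements merged into one kernel-verified Lean document; each statement's English description precedes it below -/
import Mathlib

section
/- Let A be an abelian group and H a divisible subgroup which contains, for every positive integer n, an element of order exactly n. Let t ∈ A be a torsion element and let n₀ be the smallest positive integer with n₀·t ∈ H. Then for a positive integer m, the coset t + H contains an element of order exactly m if and only if n₀ divides m. -/
/-! `n₀` is the order of `t` in `A ⧸ H`, and orders can only drop under the quotient map, so every
element of `t + H` has order divisible by `n₀`. Conversely, dividing `n₀ • t ∈ H` by `n₀` inside `H`
gives `h' ∈ H` with `t - h'` killed by `n₀`; adding to `t - h'` an element of `H` of order `m`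
yields an element of `t + H` whose order is exactly `m` as soon as `n₀ ∣ m`. -/

theorem QuotientAddGroup.addOrderOf_mk_eq_of_isLeast {A : Type*} [AddGroup A] {H : AddSubgroup A}
    [H.Normal] {t : A} {n₀ : ℕ} (hn₀ : IsLeast {n : ℕ | 0 < n ∧ n • t ∈ H} n₀) :
    addOrderOf (t : A ⧸ H) = n₀ := by
  have nsmul_mk_eq_zero (n : ℕ) : n • (t : A ⧸ H) = 0 ↔ n • t ∈ H := by
    rw [← QuotientAddGroup.mk_nsmul, QuotientAddGroup.eq_zero_iff]
  rw [addOrderOf_eq_iff hn₀.1.1, nsmul_mk_eq_zero]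
  refine ⟨hn₀.1.2, fun n hlt hpos hn => ?_⟩
  exact absurd (hn₀.2 ⟨hpos, (nsmul_mk_eq_zero n).1 hn⟩) (not_le.2 hlt)

theorem addOrderOf_mk_dvd_of_sub_mem {A : Type*} [AddGroup A] {H : AddSubgroup A} [H.Normal]
    {s t : A} (hst : s - t ∈ H) : addOrderOf (t : A ⧸ H) ∣ addOrderOf s := by
  have hmk : (s : A ⧸ H) = t := QuotientAddGroup.eq_iff_sub_mem.2 hst
  exact hmk ▸ addOrderOf_map_dvd (QuotientAddGroup.mk' H) s

theorem addOrderOf_add_eq_of_nsmul_eq_zero {A : Type*} [AddCommGroup A] {u h : A} {n : ℕ}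
    (hu : n • u = 0) (hn_add : n ∣ addOrderOf (u + h)) (hn : n ∣ addOrderOf h) :
    addOrderOf (u + h) = addOrderOf h := by
  have kills_u {k : ℕ} (hk : n ∣ k) : k • u = 0 := by
    obtain ⟨c, rfl⟩ := hk
    rw [mul_nsmul, hu, nsmul_zero]
  apply Nat.dvd_antisymm
  · apply addOrderOf_dvd_of_nsmul_eq_zero
    rw [nsmul_add, kills_u hn, addOrderOf_nsmul_eq_zero, add_zero]
  · apply addOrderOf_dvd_of_nsmul_eq_zero
    have := addOrderOf_nsmul_eq_zero (u + h)
    rwa [nsmul_add, kills_u hn_add, zero_add] at this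

theorem stmt_7_general (A : Type*) [AddCommGroup A] (H : AddSubgroup A)
    (hdiv : ∀ h ∈ H, ∀ n : ℕ, 0 < n → ∃ h' ∈ H, n • h' = h)
    (hord : ∀ n : ℕ, 0 < n → ∃ h ∈ H, addOrderOf h = n)
    (t : A) (n₀ : ℕ)
    (hn₀ : IsLeast {n : ℕ | 0 < n ∧ n • t ∈ H} n₀)
    (m : ℕ) (hm : 0 < m) :
    (∃ s : A, s - t ∈ H ∧ addOrderOf s = m) ↔ n₀ ∣ m := by
  have hquot := QuotientAddGroup.addOrderOf_mk_eq_of_isLeast hn₀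
  constructor
  · rintro ⟨s, hs, rfl⟩
    exact hquot ▸ addOrderOf_mk_dvd_of_sub_mem hs
  · intro hdvd
    obtain ⟨h', hh', hn₀h'⟩ := hdiv _ hn₀.1.2 n₀ hn₀.1.1
    obtain ⟨h, hh, rfl⟩ := hord m hm
    have hcoset : t - h' + h - t ∈ H := by
      rw [show t - h' + h - t = h - h' by abel]
      exact H.sub_mem hh hh'
    refine ⟨t - h' + h, hcoset, addOrderOf_add_eq_of_nsmul_eq_zero ?_ ?_ hdvd⟩
    · rw [nsmul_sub, hn₀h', sub_self]
    · exact hquot ▸ addOrderOf_mk_dvd_of_sub_mem hcoset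

theorem stmt_7 (A : Type*) [AddCommGroup A] (H : AddSubgroup A)
    (hdiv : ∀ h ∈ H, ∀ n : ℕ, 0 < n → ∃ h' ∈ H, n • h' = h)
    (hord : ∀ n : ℕ, 0 < n → ∃ h ∈ H, addOrderOf h = n)
    (t : A) (ht : IsOfFinAddOrder t) (n₀ : ℕ)
    (hn₀ : IsLeast {n : ℕ | 0 < n ∧ n • t ∈ H} n₀)
    (m : ℕ) (hm : 0 < m) :
    (∃ s : A, s - t ∈ H ∧ addOrderOf s = m) ↔ n₀ ∣ m :=
  stmt_7_general A H hdiv hord t n₀ hn₀ m hm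
end

section
/- Let ℓ be a prime, n and d positive integers, and M a d×d matrix with integer entries such that c := v_ℓ(det M) satisfies c ≤ n (in particular det M ≠ 0). Then the image of the induced endomorphism of (ℤ/ℓ^n ℤ)^d has index exactly ℓ^c. -/
/-!
Reduction modulo `ℓ ^ n` is surjective, so the image of `M` modulo `ℓ ^ n` has the same index
as `H = M ℤ^d + ℓ^n ℤ^d` in `ℤ^d`; that index divides `ℓ ^ (n d)`, so it is a power of `ℓ`.
Write `|det M| = ℓ^c u` with `ℓ ∤ u`, so that `[ℤ^d : M ℤ^d] = ℓ^c u`. As `c ≤ n`, `det M`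
divides `u ℓ^n`, so multiplication by `u` maps `H` into `M ℤ^d` (via the adjugate) and
`[H : M ℤ^d]` is prime to `ℓ`. Comparing `ℓ`-adic valuations in
`[ℤ^d : M ℤ^d] = [H : M ℤ^d] [ℤ^d : H]` gives `[ℤ^d : H] = ℓ^c`.
-/

theorem Nat.eq_prime_pow_of_mul_eq_prime_pow_mul {p a b c u N : ℕ} (hp : p.Prime)
    (ha : a ∣ p ^ N) (hb : ¬ p ∣ b) (hu : ¬ p ∣ u) (h : b * a = p ^ c * u) : a = p ^ c := by
  have : Fact p.Prime := ⟨hp⟩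
  obtain ⟨e, -, rfl⟩ := (Nat.dvd_prime_pow hp).mp ha
  have hb0 : b ≠ 0 := by rintro rfl; exact hb (dvd_zero p)
  have hu0 : u ≠ 0 := by rintro rfl; exact hu (dvd_zero p)
  have hval := congrArg (padicValNat p) h
  rw [padicValNat.mul hb0 (pow_ne_zero _ hp.ne_zero),
    padicValNat.mul (pow_ne_zero _ hp.ne_zero) hu0, padicValNat.prime_pow,
    padicValNat.prime_pow, padicValNat.eq_zero_of_not_dvd hb,
    padicValNat.eq_zero_of_not_dvd hu] at hval
  rw [show e = c by omega]

namespace AddSubgroup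

variable {G : Type*} [AddCommGroup G]

theorem relIndex_dvd_pow_of_forall_nsmul_mem {K H : AddSubgroup G} {u : ℕ}
    (hfin : K.relIndex H ≠ 0) (h : ∀ x ∈ H, u • x ∈ K) : ∃ r, K.relIndex H ∣ u ^ r := by
  have : Finite (H ⧸ K.addSubgroupOf H) := Nat.finite_of_card_ne_zero hfin
  refine ⟨_, card_dvd_exponent_nsmul_rank' _ fun q => ?_⟩
  induction q using QuotientAddGroup.induction_on with
  | H x => exact (QuotientAddGroup.eq_zero_iff _).mpr (h x x.2)

theorem index_sup_eq_prime_pow {K L : AddSubgroup G} {p c u N : ℕ} (hp : p.Prime)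
    (hK : K.index = p ^ c * u) (hu : ¬ p ∣ u) (hKL : (K ⊔ L).index ∣ p ^ N)
    (hL : ∀ x ∈ L, u • x ∈ K) : (K ⊔ L).index = p ^ c := by
  have hrel := relIndex_mul_index (le_sup_left : K ≤ K ⊔ L)
  have hu0 : u ≠ 0 := by rintro rfl; exact hu (dvd_zero p)
  have hfin : K.relIndex (K ⊔ L) ≠ 0 :=
    left_ne_zero_of_mul (hrel.trans hK ▸ mul_ne_zero (pow_ne_zero _ hp.ne_zero) hu0)
  have hsup : ∀ x ∈ K ⊔ L, u • x ∈ K := by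
    intro x hx
    obtain ⟨y, hy, z, hz, rfl⟩ := mem_sup.mp hx
    rw [nsmul_add]
    exact K.add_mem (K.nsmul_mem hy u) (hL z hz)
  obtain ⟨r, hr⟩ := relIndex_dvd_pow_of_forall_nsmul_mem hfin hsup
  exact Nat.eq_prime_pow_of_mul_eq_prime_pow_mul hp hKL
    (fun h => hu (hp.dvd_of_dvd_pow (h.trans hr))) hu (hrel.trans hK)

end AddSubgroup

namespace Matrix

variable {m n : Type*} [Fintype n]

theorem mem_range_mulVecLin_of_forall_det_dvd {R : Type*} [CommRing R] [DecidableEq n]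
    (M : Matrix n n R) {x : n → R} (hx : ∀ i, M.det ∣ x i) :
    x ∈ LinearMap.range M.mulVecLin := by
  choose w hw using hx
  refine ⟨M.adjugate *ᵥ w, ?_⟩
  rw [mulVecLin_apply, mulVec_mulVec, mul_adjugate, smul_mulVec, one_mulVec]
  exact funext fun i => (hw i).symm

theorem index_range_mulVecLin [DecidableEq n] (M : Matrix n n ℤ) (hM : M.det ≠ 0) :
    (LinearMap.range M.mulVecLin).toAddSubgroup.index = M.det.natAbs := by
  have hinj : Function.Injective M.mulVecLin := by
    rw [← LinearMap.ker_eq_bot, ker_mulVecLin_eq_bot_iff]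
    intro v hv
    by_contra h
    exact hM (exists_mulVec_eq_zero_iff.mp ⟨v, h, hv⟩)
  rw [← LinearMap.det_toLin']
  exact (Submodule.natAbs_det_equiv _ (LinearEquiv.ofInjective _ hinj)).symm

variable {R S : Type*} [CommRing R] [CommRing S] {f : R →+* S}

theorem range_map_mulVecLin_toAddSubgroup (hf : Function.Surjective f) (M : Matrix m n R) :
    (LinearMap.range (M.map f).mulVecLin).toAddSubgroup
      = (LinearMap.range M.mulVecLin).toAddSubgroup.map (f.toAddMonoidHom.compLeft m) := by
  ext z
  simp only [Submodule.mem_toAddSubgroup, LinearMap.mem_range, AddSubgroup.mem_map,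
    mulVecLin_apply, exists_exists_eq_and]
  have hcomm : ∀ v, f.toAddMonoidHom.compLeft m (M *ᵥ v) = M.map f *ᵥ (f ∘ v) :=
    fun v => funext (RingHom.map_mulVec f M v)
  constructor
  · rintro ⟨y, rfl⟩
    obtain ⟨v, rfl⟩ := hf.comp_left y
    exact ⟨v, hcomm v⟩
  · rintro ⟨v, rfl⟩
    exact ⟨f ∘ v, (hcomm v).symm⟩

theorem index_range_map_mulVecLin (hf : Function.Surjective f) (M : Matrix m n R) :
    (LinearMap.range (M.map f).mulVecLin).toAddSubgroup.index
      = ((LinearMap.range M.mulVecLin).toAddSubgroup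
          ⊔ (f.toAddMonoidHom.compLeft m).ker).index := by
  rw [range_map_mulVecLin_toAddSubgroup hf, AddSubgroup.index_map,
    (f.toAddMonoidHom.compLeft m).range_eq_top_of_surjective hf.comp_left,
    AddSubgroup.index_top, mul_one]

end Matrix

theorem stmt_8_general (ℓ : ℕ) (hℓ : ℓ.Prime) (n d : ℕ)
    (M : Matrix (Fin d) (Fin d) ℤ) (c : ℕ)
    (hc1 : (ℓ : ℤ) ^ c ∣ M.det) (hc2 : ¬ (ℓ : ℤ) ^ (c + 1) ∣ M.det)
    (hcn : c ≤ n) :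
    (LinearMap.range
        (Matrix.mulVecLin (M.map (Int.cast : ℤ → ZMod (ℓ ^ n))))).toAddSubgroup.index
      = ℓ ^ c := by
  have : NeZero (ℓ ^ n) := ⟨pow_ne_zero n hℓ.ne_zero⟩
  set K := (LinearMap.range M.mulVecLin).toAddSubgroup
  set π := (Int.castRingHom (ZMod (ℓ ^ n))).toAddMonoidHom.compLeft (Fin d)
  have hidx := Matrix.index_range_map_mulVecLin (f := Int.castRingHom (ZMod (ℓ ^ n)))
    ZMod.intCast_surjective M
  rw [Int.coe_castRingHom] at hidx
  obtain ⟨u, hu⟩ : ℓ ^ c ∣ M.det.natAbs := by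
    simpa [Int.natAbs_pow] using Int.natAbs_dvd_natAbs.mpr hc1
  have hℓu : ¬ ℓ ∣ u := by
    rintro ⟨s, rfl⟩
    exact hc2 (Int.natCast_dvd.mpr ⟨s, by rw [hu, pow_succ, mul_assoc]⟩)
  have hK : K.index = ℓ ^ c * u := by
    rw [M.index_range_mulVecLin fun h => hc2 (h ▸ dvd_zero _), hu]
  have hker : ∀ z ∈ π.ker, u • z ∈ K := fun z hz =>
    M.mem_range_mulVecLin_of_forall_det_dvd fun i => by
      have hzi : (ℓ : ℤ) ^ n ∣ z i := by
        exact_mod_cast (ZMod.intCast_zmod_eq_zero_iff_dvd (z i) (ℓ ^ n)).mp (congrFun hz i)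
      calc M.det ∣ (M.det.natAbs : ℤ) := Int.dvd_natAbs.mpr dvd_rfl
        _ = u * (ℓ : ℤ) ^ c := by rw [hu]; push_cast; ring
        _ ∣ (u • z) i := by
          rw [Pi.smul_apply, nsmul_eq_mul]
          exact mul_dvd_mul_left _ ((pow_dvd_pow _ hcn).trans hzi)
  have hdvd : (K ⊔ π.ker).index ∣ ℓ ^ (n * d) :=
    hidx ▸ (AddSubgroup.index_dvd_card _).trans (by simp [pow_mul])
  rw [hidx]
  exact AddSubgroup.index_sup_eq_prime_pow hℓ hK hℓu hdvd hker

theorem stmt_8 (ℓ : ℕ) (hℓ : ℓ.Prime) (n d : ℕ) (hn : 0 < n) (hd : 0 < d)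
    (M : Matrix (Fin d) (Fin d) ℤ) (c : ℕ)
    (hc1 : (ℓ : ℤ) ^ c ∣ M.det) (hc2 : ¬ (ℓ : ℤ) ^ (c + 1) ∣ M.det)
    (hcn : c ≤ n) :
    (LinearMap.range
        (Matrix.mulVecLin (M.map (Int.cast : ℤ → ZMod (ℓ ^ n))))).toAddSubgroup.index
      = ℓ ^ c :=
  stmt_8_general ℓ hℓ n d M c hc1 hc2 hcn
end

section
/- Let ℓ be a prime, n and d positive integers, and M a d×d integer matrix with det M ≡ 0 (mod ℓ^n). Then the image of the induced endomorphism of (ℤ/ℓ^nℤ)^d has cardinality at most ℓ^{nd − n}, i.e., its index is at least ℓ^n. -/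
/-!
Adding to `M` a multiple of `ℓ ^ n` times the identity does not change its reduction mod `ℓ ^ n`,
and all but finitely many such perturbations are nonsingular, so we may assume `det M ≠ 0`. Then
`Q = ℤ^d / M ℤ^d` is finite of order `|det M|`, a multiple of `ℓ ^ n`, and the cokernel of `M`
mod `ℓ ^ n` is `Q / ℓ^n Q`. Its order is that of the `ℓ ^ n`-torsion of `Q`, which contains a
subgroup of order `ℓ ^ n` by Sylow's theorem.
-/

open Matrix

theorem Matrix.exists_dvd_and_det_add_smul_one_ne_zero {ι R : Type*} [Fintype ι] [DecidableEq ι]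
    [CommRing R] [IsDomain R] [Infinite R] (A : Matrix ι ι R) {m : R} (hm : m ≠ 0) :
    ∃ c, m ∣ c ∧ (A + c • 1).det ≠ 0 := by
  have hroots : {c | (-A).charpoly.IsRoot c}.Finite :=
    Polynomial.finite_setOfPred_isRoot (Matrix.charpoly_monic _).ne_zero
  have hmultiples : (Set.range (m * ·)).Infinite :=
    Set.infinite_range_of_injective (mul_right_injective₀ hm)
  obtain ⟨_, ⟨t, rfl⟩, hc⟩ := (hmultiples.sdiff hroots).nonempty
  refine ⟨m * t, dvd_mul_right m t, fun h => hc ?_⟩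
  rw [Set.mem_ofPred_eq, Polynomial.IsRoot, eval_charpoly, sub_neg_eq_add, add_comm, ← h,
    smul_one_eq_diagonal]
  rfl

theorem Matrix.card_quotient_range_mulVecLin {ι : Type*} [Fintype ι] [DecidableEq ι]
    (A : Matrix ι ι ℤ) (hA : A.det ≠ 0) :
    Nat.card ((ι → ℤ) ⧸ LinearMap.range A.mulVecLin) = A.det.natAbs := by
  have hinj : Function.Injective A.mulVecLin := by
    rw [← LinearMap.ker_eq_bot, LinearMap.ker_eq_bot']
    intro v hv
    by_contra hne
    exact hA (exists_mulVec_eq_zero_iff.mp ⟨v, hne, hv⟩)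
  rw [← Submodule.natAbs_det_equiv _ (LinearEquiv.ofInjective _ hinj), ← LinearMap.det_toLin']
  rfl

theorem ker_compLeft_intCast_eq_range_nsmul (ι : Type*) (m : ℕ) :
    ((Int.castAddHom (ZMod m)).compLeft ι).ker = (nsmulAddMonoidHom (α := ι → ℤ) m).range := by
  ext x
  simp only [AddMonoidHom.mem_ker, AddMonoidHom.mem_range, nsmulAddMonoidHom_apply]
  constructor
  · intro hx
    have hdvd i : (m : ℤ) ∣ x i := (ZMod.intCast_zmod_eq_zero_iff_dvd _ _).mp (congrFun hx i)
    exact ⟨fun i => x i / m, funext fun i => by simp [Int.mul_ediv_cancel' (hdvd i)]⟩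
  · rintro ⟨y, rfl⟩
    funext i
    simp

theorem Matrix.index_range_mulVecLin_map_intCast {ι : Type*} [Fintype ι]
    (A : Matrix ι ι ℤ) (m : ℕ) :
    (LinearMap.range (A.map (Int.cast : ℤ → ZMod m)).mulVecLin).toAddSubgroup.index =
      ((LinearMap.range A.mulVecLin).toAddSubgroup ⊔
        (nsmulAddMonoidHom (α := ι → ℤ) m).range).index := by
  set π := (Int.castAddHom (ZMod m)).compLeft ι
  have hπ : Function.Surjective π := (ZMod.intCast_surjective).comp_left
  have hcomm x : π (A *ᵥ x) = A.map (Int.cast : ℤ → ZMod m) *ᵥ π x :=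
    funext (RingHom.map_mulVec (Int.castRingHom (ZMod m)) A x)
  have hrange : (LinearMap.range (A.map (Int.cast : ℤ → ZMod m)).mulVecLin).toAddSubgroup =
      (LinearMap.range A.mulVecLin).toAddSubgroup.map π := by
    ext v
    simp only [Submodule.mem_toAddSubgroup, LinearMap.mem_range, mulVecLin_apply,
      AddSubgroup.mem_map, exists_exists_eq_and, hcomm]
    constructor
    · rintro ⟨u, rfl⟩
      obtain ⟨x, rfl⟩ := hπ u
      exact ⟨x, rfl⟩
    · rintro ⟨x, rfl⟩
      exact ⟨π x, rfl⟩
  rw [← AddSubgroup.index_comap_of_surjective _ hπ, hrange, AddSubgroup.comap_map_eq,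
    ker_compLeft_intCast_eq_range_nsmul]

theorem pow_le_card_ker_nsmul {Q : Type*} [AddCommGroup Q] [Finite Q] {p n : ℕ} [Fact p.Prime]
    (h : p ^ n ∣ Nat.card Q) : p ^ n ≤ Nat.card (nsmulAddMonoidHom (α := Q) (p ^ n)).ker := by
  obtain ⟨K, hK⟩ := Sylow.exists_subgroup_card_pow_prime (G := Multiplicative Q) p h
  set K' := Subgroup.toAddSubgroup' K
  have hK' : Nat.card K' = p ^ n := hK
  calc p ^ n = Nat.card K' := hK'.symm
    _ ≤ _ := AddSubgroup.card_le_of_le fun x hx => by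
      simpa [hK'] using congrArg Subtype.val (card_nsmul_eq_zero' (x := (⟨x, hx⟩ : K')))

theorem pow_le_index_sup_range_nsmul {G : Type*} [AddCommGroup G] {A : AddSubgroup G} {p n : ℕ}
    [Fact p.Prime] (hA : A.index ≠ 0) (h : p ^ n ∣ A.index) :
    p ^ n ≤ (A ⊔ (nsmulAddMonoidHom (α := G) (p ^ n)).range).index := by
  have : A.FiniteIndex := ⟨hA⟩
  set mk := QuotientAddGroup.mk' A
  have hmk : mk.range = ⊤ := AddMonoidHom.range_eq_top.mpr (QuotientAddGroup.mk'_surjective A)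
  have hmap : (nsmulAddMonoidHom (α := G) (p ^ n)).range.map mk =
      (nsmulAddMonoidHom (α := G ⧸ A) (p ^ n)).range := by
    have hcomm : mk.comp (nsmulAddMonoidHom (p ^ n)) = (nsmulAddMonoidHom (p ^ n)).comp mk := by
      ext; simp
    rw [AddMonoidHom.map_range, hcomm, AddMonoidHom.range_comp, hmk, ← AddMonoidHom.range_eq_map]
  have hindex := AddSubgroup.index_map (nsmulAddMonoidHom (α := G) (p ^ n)).range mk
  rw [hmap, AddSubgroup.index_range, QuotientAddGroup.ker_mk', hmk, AddSubgroup.index_top,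
    mul_one, sup_comm] at hindex
  exact hindex ▸ pow_le_card_ker_nsmul h

theorem AddSubgroup.card_le_pow_sub_of_pow_le_index {G : Type*} [AddGroup G] {H : AddSubgroup G}
    {p a b : ℕ} (hp : 1 < p) (hG : Nat.card G = p ^ a) (hH : p ^ b ≤ H.index) :
    Nat.card H ≤ p ^ (a - b) := by
  have hcard : Nat.card H * H.index = p ^ a := H.card_mul_index.trans hG
  have hba : b ≤ a := (Nat.pow_le_pow_iff_right hp).mp <|
    hH.trans (Nat.le_of_dvd (by positivity) (Dvd.intro_left _ hcard))
  refine Nat.le_of_mul_le_mul_right (c := p ^ b) ?_ (by positivity)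
  calc Nat.card H * p ^ b ≤ Nat.card H * H.index := Nat.mul_le_mul_left _ hH
    _ = p ^ (a - b) * p ^ b := by rw [hcard, ← pow_add, Nat.sub_add_cancel hba]

theorem stmt_9_general (ℓ : ℕ) (hℓ : ℓ.Prime) (n d : ℕ)
    (M : Matrix (Fin d) (Fin d) ℤ)
    (hdet : (ℓ : ℤ) ^ n ∣ M.det) :
    Nat.card (LinearMap.range
        (Matrix.mulVecLin (M.map (Int.cast : ℤ → ZMod (ℓ ^ n))))) ≤ ℓ ^ (n * d - n) ∧
    ℓ ^ n ≤ (LinearMap.range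
        (Matrix.mulVecLin (M.map (Int.cast : ℤ → ZMod (ℓ ^ n))))).toAddSubgroup.index := by
  have : Fact ℓ.Prime := ⟨hℓ⟩
  obtain ⟨c, hc, hdet_ne⟩ := M.exists_dvd_and_det_add_smul_one_ne_zero
    (pow_ne_zero n (Int.natCast_ne_zero.mpr hℓ.ne_zero))
  have hc_zero : (c : ZMod (ℓ ^ n)) = 0 :=
    (ZMod.intCast_zmod_eq_zero_iff_dvd _ _).mpr (by exact_mod_cast hc)
  have hmap : (M + c • 1).map (Int.cast : ℤ → ZMod (ℓ ^ n)) = M.map Int.cast := by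
    ext i j
    simp only [map_apply, Matrix.add_apply, Matrix.smul_apply, smul_eq_mul, Int.cast_add,
      Int.cast_mul, hc_zero, zero_mul, add_zero]
  have hdvd : (ℓ : ℤ) ^ n ∣ (M + c • 1).det := by
    have := (ZMod.intCast_zmod_eq_zero_iff_dvd M.det (ℓ ^ n)).mpr (by exact_mod_cast hdet)
    rw [Int.cast_det, ← hmap, ← Int.cast_det, ZMod.intCast_zmod_eq_zero_iff_dvd] at this
    exact_mod_cast this
  have hindex : ℓ ^ n ≤ (LinearMap.range
      (Matrix.mulVecLin (M.map (Int.cast : ℤ → ZMod (ℓ ^ n))))).toAddSubgroup.index := by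
    have hcard : (LinearMap.range (M + c • 1).mulVecLin).toAddSubgroup.index =
        (M + c • 1).det.natAbs :=
      card_quotient_range_mulVecLin _ hdet_ne
    rw [← hmap, index_range_mulVecLin_map_intCast]
    refine pow_le_index_sup_range_nsmul ?_ ?_ <;> rw [hcard]
    · exact Int.natAbs_ne_zero.mpr hdet_ne
    · exact Int.natAbs_dvd_natAbs.mpr hdvd
  refine ⟨AddSubgroup.card_le_pow_sub_of_pow_le_index hℓ.one_lt ?_ hindex, hindex⟩
  rw [Nat.card_pi]
  simp [pow_mul]

theorem stmt_9 (ℓ : ℕ) (hℓ : ℓ.Prime) (n d : ℕ) (hn : 0 < n) (hd : 0 < d)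
    (M : Matrix (Fin d) (Fin d) ℤ)
    (hdet : (ℓ : ℤ) ^ n ∣ M.det) :
    Nat.card (LinearMap.range
        (Matrix.mulVecLin (M.map (Int.cast : ℤ → ZMod (ℓ ^ n))))) ≤ ℓ ^ (n * d - n) ∧
    ℓ ^ n ≤ (LinearMap.range
        (Matrix.mulVecLin (M.map (Int.cast : ℤ → ZMod (ℓ ^ n))))).toAddSubgroup.index :=
  stmt_9_general ℓ hℓ n d M hdet
end

section
/- Let r be a rational number with r > 1, and let ℓ be a prime. Then there exist infinitely many primes p (not dividing the numerator or denominator of r) such that the multiplicative order of r modulo p is coprime to ℓ. -/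
/-!
Write `r = a / b` in lowest terms and fix a prime `q > ℓ`. Any prime `p` dividing
`(a ^ q - b ^ q) / (a - b) = ∑ aⁱ b^(q-1-i) > 1` is prime to `ab` and satisfies `(a / b) ^ q = 1`
mod `p`, so the order of `a / b` is `1` or `q`, hence prime to `ℓ`. Moreover `p ≥ q`: order `q`
forces `q ∣ p - 1`, while order `1` makes the sum `≡ q b^(q-1)`, so `p = q`. Letting `q → ∞`
gives infinitely many such `p`.
-/

open Finset

section Field

variable {K : Type*} [Field K] {x y : K} {n : ℕ}

lemma pow_eq_pow_of_geom_sum₂_eq_zero (h : ∑ i ∈ range n, x ^ i * y ^ (n - 1 - i) = 0) :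
    x ^ n = y ^ n := by
  rw [← sub_eq_zero, ← geom_sum₂_mul, h, zero_mul]

lemma eq_zero_iff_eq_zero_of_geom_sum₂_eq_zero (hn : n ≠ 0)
    (h : ∑ i ∈ range n, x ^ i * y ^ (n - 1 - i) = 0) : x = 0 ↔ y = 0 := by
  rw [← pow_eq_zero_iff hn, pow_eq_pow_of_geom_sum₂_eq_zero h, pow_eq_zero_iff hn]

lemma orderOf_mul_inv_dvd_of_geom_sum₂_eq_zero (hy : y ≠ 0)
    (h : ∑ i ∈ range n, x ^ i * y ^ (n - 1 - i) = 0) : orderOf (x * y⁻¹) ∣ n :=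
  orderOf_dvd_of_pow_eq_one <| by
    rw [mul_pow, pow_eq_pow_of_geom_sum₂_eq_zero h, inv_pow, mul_inv_cancel₀ (pow_ne_zero n hy)]

end Field

lemma ZMod.le_of_geom_sum₂_eq_zero {p q : ℕ} [hp : Fact p.Prime] (hq : q.Prime) {x y : ZMod p}
    (hy : y ≠ 0) (h : ∑ i ∈ range q, x ^ i * y ^ (q - 1 - i) = 0) : q ≤ p := by
  rcases hq.eq_one_or_self_of_dvd _ (orderOf_mul_inv_dvd_of_geom_sum₂_eq_zero hy h) with hord | hord
  · rw [orderOf_eq_one_iff, mul_inv_eq_one₀ hy] at hord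
    rw [hord, geom_sum₂_self, mul_eq_zero, or_iff_left (pow_ne_zero _ hy),
      ZMod.natCast_eq_zero_iff, Nat.prime_dvd_prime_iff_eq hp.out hq] at h
    exact h.ge
  · have hx : x ≠ 0 := mt (eq_zero_iff_eq_zero_of_geom_sum₂_eq_zero hq.ne_zero h).mp hy
    have := Nat.le_of_dvd (Nat.sub_pos_of_lt hp.out.one_lt)
      (hord ▸ ZMod.orderOf_dvd_card_sub_one (mul_ne_zero hx (inv_ne_zero hy)))
    omega

lemma one_lt_geom_sum₂ {R : Type*} [Semiring R] [PartialOrder R] [IsOrderedRing R] {a b : R}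
    (ha : 1 < a) (hb : 0 ≤ b) {n : ℕ} (hn : 2 ≤ n) :
    1 < ∑ i ∈ range n, a ^ i * b ^ (n - 1 - i) :=
  calc 1 < a := ha
    _ ≤ a ^ (n - 1) := le_self_pow₀ ha.le (by omega)
    _ = a ^ (n - 1) * b ^ (n - 1 - (n - 1)) := by simp
    _ ≤ ∑ i ∈ range n, a ^ i * b ^ (n - 1 - i) :=
      single_le_sum (f := fun i => a ^ i * b ^ (n - 1 - i))
        (fun i _ => mul_nonneg (pow_nonneg (zero_le_one.trans ha.le) i) (pow_nonneg hb _))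
        (mem_range.mpr (by omega))

lemma exists_prime_le_orderOf_mul_inv_dvd {a b : ℤ} (hab : IsCoprime a b) (ha : 1 < a) (hb : 0 ≤ b)
    {q : ℕ} (hq : q.Prime) :
    ∃ p, p.Prime ∧ q ≤ p ∧ ¬ (p : ℤ) ∣ a ∧ ¬ (p : ℤ) ∣ b ∧
      orderOf ((a : ZMod p) * (b : ZMod p)⁻¹) ∣ q := by
  set S := ∑ i ∈ range q, a ^ i * b ^ (q - 1 - i)
  have hS : S.natAbs ≠ 1 := by have := one_lt_geom_sum₂ ha hb hq.two_le; omega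
  obtain ⟨p, hp, hpS⟩ := Nat.exists_prime_and_dvd hS
  have : Fact p.Prime := ⟨hp⟩
  have hS0 : ∑ i ∈ range q, (a : ZMod p) ^ i * (b : ZMod p) ^ (q - 1 - i) = 0 := by
    rw [← Int.ofNat_dvd_left, ← ZMod.intCast_zmod_eq_zero_iff_dvd] at hpS
    exact_mod_cast hpS
  have hb0 : (b : ZMod p) ≠ 0 := by
    intro hb0
    have ha0 := (eq_zero_iff_eq_zero_of_geom_sum₂_eq_zero hq.ne_zero hS0).mpr hb0
    have hab' : IsCoprime (a : ZMod p) (b : ZMod p) := hab.intCast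
    rw [ha0, hb0] at hab'
    exact not_isCoprime_zero_zero hab'
  have ha0 := mt (eq_zero_iff_eq_zero_of_geom_sum₂_eq_zero hq.ne_zero hS0).mp hb0
  refine ⟨p, hp, ZMod.le_of_geom_sum₂_eq_zero hq hb0 hS0, ?_, ?_,
    orderOf_mul_inv_dvd_of_geom_sum₂_eq_zero hb0 hS0⟩ <;>
    rwa [← ZMod.intCast_zmod_eq_zero_iff_dvd]

theorem stmt_15 (r : ℚ) (hr : 1 < r) (ℓ : ℕ) (hℓ : ℓ.Prime) :
    {p : ℕ | p.Prime ∧ ¬ (p : ℤ) ∣ r.num ∧ ¬ p ∣ r.den ∧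
      Nat.Coprime (orderOf ((r.num : ZMod p) * (r.den : ZMod p)⁻¹)) ℓ}.Infinite := by
  have hnum : (r.den : ℤ) < r.num := by
    rw [← Rat.num_div_den r, one_lt_div (by positivity)] at hr
    exact_mod_cast hr
  refine Set.infinite_of_forall_exists_gt fun N => ?_
  obtain ⟨q, hNq, hq⟩ := Nat.exists_infinite_primes (N + ℓ + 1)
  obtain ⟨p, hp, hqp, hpnum, hpden, hord⟩ := exists_prime_le_orderOf_mul_inv_dvd
    r.isCoprime_num_den (by have := r.den_pos; omega) (Nat.cast_nonneg r.den) hq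
  have hqℓ : q.Coprime ℓ := (Nat.coprime_primes hq hℓ).mpr (by omega)
  refine ⟨p, ⟨hp, hpnum, by exact_mod_cast hpden, ?_⟩, by omega⟩
  exact Nat.Coprime.coprime_dvd_left (by exact_mod_cast hord) hqℓ
end
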